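/- For every vertex v ∈ V there are integers m < n such that for every characteristic vector K and every E ⊆ V with v ∈ E: if K(v) ≥ n then a_v(K,E) = 0 and b_v(K,E) > 0, and if K(v) ≤ m then b_v(K,E) = 0 and a_v(K,E) > 0. -/
import Mathlib


open Finset

variable {V : Type*}

/-- `M` is negative definite: `xᵀMx < 0` for every nonzero `x ∈ ℝ^V`. -/
def NegDef [Fintype V] (M : V → V → ℤ) : Prop :=
  ∀ x : V → ℝ, x ≠ 0 → (∑ v, ∑ w, (M v w : ℝ) * x v * x w) < 0

/-- `K` is a characteristic vector for `M`: `K(v) ≡ v·v (mod 2)` for all `v`. -/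
def IsChar (M : V → V → ℤ) (K : V → ℤ) : Prop :=
  ∀ v, Int.ModEq 2 (K v) (M v v)

/-- `f(K, I) = (1/2)(Σ_{v∈I} K(v) + (Σ_{v∈I} v)·(Σ_{v∈I} v))` (an exact integer division
for characteristic `K`). -/
def latF (M : V → V → ℤ) (K : V → ℤ) (I : Finset V) : ℤ :=
  ((∑ v ∈ I, K v) + ∑ v ∈ I, ∑ w ∈ I, M v w) / 2

/-- `g(K, E) = min_{I ⊆ E} f(K, I)`. -/
def latG (M : V → V → ℤ) (K : V → ℤ) (E : Finset V) : ℤ :=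
  (E.powerset.image (latF M K)).min'
    ⟨_, Finset.mem_image_of_mem _ (Finset.empty_mem_powerset E)⟩

/-- `B_v(K, E) = min { f(K, I) : v ∈ I ⊆ E }` (for `v ∈ E`). -/
def latB [DecidableEq V] (M : V → V → ℤ) (K : V → ℤ) (E : Finset V) (v : V) : ℤ :=
  ((E.erase v).powerset.image (fun I => latF M K (insert v I))).min'
    ⟨_, Finset.mem_image_of_mem _ (Finset.empty_mem_powerset _)⟩

/-- `a_v(K,E) = A_v(K,E) - g(K,E) = g(K, E∖{v}) - g(K,E)`. -/
def lata [DecidableEq V] (M : V → V → ℤ) (K : V → ℤ) (E : Finset V) (v : V) : ℤ :=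
  latG M K (E.erase v) - latG M K E

/-- `b_v(K,E) = B_v(K,E) - g(K,E)`. -/
def latb [DecidableEq V] (M : V → V → ℤ) (K : V → ℤ) (E : Finset V) (v : V) : ℤ :=
  latB M K E v - latG M K E

section Aux

variable [DecidableEq V]

lemma num_insert (M : V → V → ℤ) (hsym : ∀ v w, M v w = M w v) (K : V → ℤ)
    {v : V} {I : Finset V} (hv : v ∉ I) :
    ((∑ x ∈ insert v I, K x) + ∑ a ∈ insert v I, ∑ b ∈ insert v I, M a b)
      = ((∑ x ∈ I, K x) + ∑ a ∈ I, ∑ b ∈ I, M a b) + (K v + M v v)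
        + 2 * ∑ w ∈ I, M v w := by
  rw [Finset.sum_insert hv, Finset.sum_insert hv]
  have h1 : ∀ a ∈ I, ∑ b ∈ insert v I, M a b = M a v + ∑ b ∈ I, M a b := by
    intro a _; rw [Finset.sum_insert hv]
  rw [Finset.sum_congr rfl h1, Finset.sum_insert hv, Finset.sum_add_distrib]
  have h2 : ∑ a ∈ I, M a v = ∑ a ∈ I, M v a :=
    Finset.sum_congr rfl (fun a _ => hsym a v)
  rw [h2]; ring

lemma num_even (M : V → V → ℤ) (hsym : ∀ v w, M v w = M w v) (K : V → ℤ)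
    (hK : IsChar M K) (I : Finset V) :
    ∃ t : ℤ, (∑ x ∈ I, K x) + ∑ a ∈ I, ∑ b ∈ I, M a b = 2 * t := by
  induction I using Finset.induction_on with
  | empty => exact ⟨0, by simp⟩
  | @insert v I hv ih =>
    obtain ⟨t, ht⟩ := ih
    obtain ⟨s, hs⟩ := (hK v).dvd
    rw [num_insert M hsym K hv]
    exact ⟨t + K v + s + ∑ w ∈ I, M v w, by omega⟩

lemma latF_insert (M : V → V → ℤ) (hsym : ∀ v w, M v w = M w v) (K : V → ℤ)
    (hK : IsChar M K) {v : V} {I : Finset V} (hv : v ∉ I) :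
    latF M K (insert v I) = latF M K I + (K v + M v v) / 2 + ∑ w ∈ I, M v w := by
  unfold latF
  obtain ⟨t, ht⟩ := num_even M hsym K hK I
  obtain ⟨s, hs⟩ := (hK v).dvd
  rw [num_insert M hsym K hv]
  omega

lemma latG_le (M : V → V → ℤ) (K : V → ℤ) {E I : Finset V} (hI : I ⊆ E) :
    latG M K E ≤ latF M K I :=
  Finset.min'_le _ _ (Finset.mem_image_of_mem _ (Finset.mem_powerset.mpr hI))

lemma latG_exists (M : V → V → ℤ) (K : V → ℤ) (E : Finset V) :
    ∃ I ⊆ E, latG M K E = latF M K I := by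
  have h := Finset.min'_mem (E.powerset.image (latF M K))
    ⟨_, Finset.mem_image_of_mem _ (Finset.empty_mem_powerset E)⟩
  rw [Finset.mem_image] at h
  obtain ⟨I, hI, hIeq⟩ := h
  exact ⟨I, Finset.mem_powerset.mp hI, hIeq.symm⟩

lemma latB_le (M : V → V → ℤ) (K : V → ℤ) {E I : Finset V} {v : V}
    (hI : I ⊆ E.erase v) :
    latB M K E v ≤ latF M K (insert v I) :=
  Finset.min'_le _ _ (Finset.mem_image_of_mem _ (Finset.mem_powerset.mpr hI))

lemma latB_exists (M : V → V → ℤ) (K : V → ℤ) (E : Finset V) (v : V) :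
    ∃ I ⊆ E.erase v, latB M K E v = latF M K (insert v I) := by
  have h := Finset.min'_mem ((E.erase v).powerset.image (fun I => latF M K (insert v I)))
    ⟨_, Finset.mem_image_of_mem _ (Finset.empty_mem_powerset _)⟩
  rw [Finset.mem_image] at h
  obtain ⟨I, hI, hIeq⟩ := h
  exact ⟨I, Finset.mem_powerset.mp hI, hIeq.symm⟩

end Aux

/-- for every vertex `v` there are integers `m < n` such that for every
characteristic `K` and every `E ∋ v`: if `K(v) ≥ n` then `a_v(K,E) = 0` and `b_v(K,E) > 0`,
and if `K(v) ≤ m` then `b_v(K,E) = 0` and `a_v(K,E) > 0`. -/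
theorem stmt15 [Fintype V] [DecidableEq V] (M : V → V → ℤ)
    (hsym : ∀ v w, M v w = M w v)
    (hoff : ∀ v w, v ≠ w → M v w = 0 ∨ M v w = 1)
    (hneg : NegDef M)
    (v : V) :
    ∃ m n : ℤ, m < n ∧
      ∀ K : V → ℤ, IsChar M K → ∀ E : Finset V, v ∈ E →
        (n ≤ K v → lata M K E v = 0 ∧ 0 < latb M K E v) ∧
        (K v ≤ m → latb M K E v = 0 ∧ 0 < lata M K E v) := by
  classical
  set d : ℤ := ∑ w ∈ Finset.univ.erase v, M v w with hd
  have hMnn : ∀ w, w ≠ v → 0 ≤ M v w := by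
    intro w hw
    rcases hoff v w (Ne.symm hw) with h | h <;> omega
  have hd0 : 0 ≤ d := Finset.sum_nonneg fun w hw =>
    hMnn w (Finset.mem_erase.mp hw).1
  refine ⟨-M v v - 2 * d - 2, 2 - M v v, by omega, ?_⟩
  intro K hK E hvE
  -- bounds on the cross term
  have hcb : ∀ I : Finset V, I ⊆ E.erase v →
      0 ≤ (∑ w ∈ I, M v w) ∧ (∑ w ∈ I, M v w) ≤ d := by
    intro I hI
    have hsub : I ⊆ Finset.univ.erase v :=
      hI.trans (Finset.erase_subset_erase v (Finset.subset_univ E))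
    constructor
    · exact Finset.sum_nonneg fun w hw => hMnn w (Finset.mem_erase.mp (hsub hw)).1
    · exact Finset.sum_le_sum_of_subset_of_nonneg hsub
        (fun w hw _ => hMnn w (Finset.mem_erase.mp hw).1)
  obtain ⟨s, hs⟩ := (hK v).dvd
  constructor
  · -- large K v
    intro hn
    have hstep : ∀ I : Finset V, I ⊆ E.erase v →
        latF M K I + 1 ≤ latF M K (insert v I) := by
      intro I hI
      have hv : v ∉ I := fun h => (Finset.mem_erase.mp (hI h)).1 rfl
      have h1 := latF_insert M hsym K hK hv
      have h2 := (hcb I hI).1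
      omega
    -- latG (E.erase v) = latG E
    have le1 : latG M K E ≤ latG M K (E.erase v) := by
      obtain ⟨I, hI, hIeq⟩ := latG_exists M K (E.erase v)
      rw [hIeq]
      exact latG_le M K (hI.trans (Finset.erase_subset v E))
    have le2 : latG M K (E.erase v) ≤ latG M K E := by
      obtain ⟨I, hI, hIeq⟩ := latG_exists M K E
      by_cases hvI : v ∈ I
      · have hIe : I.erase v ⊆ E.erase v := Finset.erase_subset_erase v hI
        have h1 := hstep _ hIe
        rw [Finset.insert_erase hvI] at h1
        have h2 := latG_le M K hIe
        omega
      · have h2 : I ⊆ E.erase v := Finset.subset_erase.mpr ⟨hI, hvI⟩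
        have := latG_le M K h2
        omega
    have hbpos : 0 < latb M K E v := by
      obtain ⟨I, hI, hIeq⟩ := latB_exists M K E v
      have h1 := hstep I hI
      have h2 := latG_le M K (hI.trans (Finset.erase_subset v E))
      unfold latb
      omega
    exact ⟨by unfold lata; omega, hbpos⟩
  · -- small K v
    intro hm
    have hstep : ∀ I : Finset V, I ⊆ E.erase v →
        latF M K (insert v I) + 1 ≤ latF M K I := by
      intro I hI
      have hv : v ∉ I := fun h => (Finset.mem_erase.mp (hI h)).1 rfl
      have h1 := latF_insert M hsym K hK hv
      have h2 := (hcb I hI).2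
      omega
    have hins : ∀ I : Finset V, I ⊆ E.erase v → insert v I ⊆ E := by
      intro I hI
      exact Finset.insert_subset hvE (hI.trans (Finset.erase_subset v E))
    have le1 : latG M K E ≤ latB M K E v := by
      obtain ⟨I, hI, hIeq⟩ := latB_exists M K E v
      rw [hIeq]
      exact latG_le M K (hins I hI)
    have le2 : latB M K E v ≤ latG M K E := by
      obtain ⟨I, hI, hIeq⟩ := latG_exists M K E
      by_cases hvI : v ∈ I
      · have hIe : I.erase v ⊆ E.erase v := Finset.erase_subset_erase v hI
        have h1 := latB_le M K hIe
        rw [Finset.insert_erase hvI] at h1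
        omega
      · have hIsub : I ⊆ E.erase v := Finset.subset_erase.mpr ⟨hI, hvI⟩
        have h1 := hstep I hIsub
        have h2 := latB_le M K hIsub
        omega
    have hapos : 0 < lata M K E v := by
      obtain ⟨I, hI, hIeq⟩ := latG_exists M K (E.erase v)
      have h1 := hstep I hI
      have h2 := latG_le M K (hins I hI)
      unfold lata
      omega
    exact ⟨by unfold latb; omega, hapos⟩
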